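/- arXiv:1307.6881 — 2 statements merged into one kernel-verified Lean document; each statement's English description precedes it below -/
import Mathlib

section
/- Let q ≥ 2 and d₁, d₂ ≥ 1 be integers with gcd(d₁, d₂) = 1. Then there exists an integer c with gcd(c, q−1) = 1 such that gcd(c·d₁ − d₂, q−1) = 2 if q, d₁, d₂ are all odd, and gcd(c·d₁ − d₂, q−1) = 1 otherwise. -/
/-! Whether some `c` prime to `n` gives `gcd (c d₁ - d₂) n = g` depends only on `c` modulo `n`,
so by the Chinese remainder theorem the achievable values of `g` multiply over coprime factors of
`n = q - 1`. For a power of an odd prime `p`, one of `c = 1, 2` works, as `p` cannot divide both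
`d₁ - d₂` and `2 d₁ - d₂`. For `2 ^ s` with `s ≥ 1`, `c = 1` works unless `d₁, d₂` are both odd;
then `c = -d₁ d₂` gives `c d₁ - d₂ = -d₂ (d₁ ^ 2 + 1)`, which is twice an odd number. -/

theorem Int.gcd_eq_gcd_of_modEq {n x y : ℤ} (h : x ≡ y [ZMOD n]) : Int.gcd x n = Int.gcd y n := by
  rw [← Int.gcd_emod x, ← Int.gcd_emod y, h]

theorem Int.exists_modEq_and_modEq {a b : ℤ} (hab : IsCoprime a b) (x y : ℤ) :
    ∃ c, c ≡ x [ZMOD a] ∧ c ≡ y [ZMOD b] := by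
  obtain ⟨u, v, huv⟩ := hab
  refine ⟨x * (v * b) + y * (u * a), ?_, ?_⟩
  · exact (Int.modEq_iff_dvd.mpr ⟨(y - x) * u, by linear_combination x * huv⟩).symm
  · exact (Int.modEq_iff_dvd.mpr ⟨(x - y) * v, by linear_combination y * huv⟩).symm

theorem Int.gcd_mul_right_of_isCoprime (x : ℤ) {a b : ℤ} (hab : IsCoprime a b) :
    Int.gcd x (a * b) = Int.gcd x a * Int.gcd x b := by
  rw [Int.isCoprime_iff_gcd_eq_one, Int.gcd_eq_natAbs_gcd_natAbs] at hab
  simp only [Int.gcd_eq_natAbs_gcd_natAbs, Int.natAbs_mul]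
  exact Nat.Coprime.gcd_mul _ hab

theorem Int.gcd_two_pow_eq_one_of_odd {x : ℤ} (hx : Odd x) (s : ℕ) : Int.gcd x (2 ^ s) = 1 :=
  Int.isCoprime_iff_gcd_eq_one.mp (Int.isCoprime_two_right.mpr hx).pow_right

def HasUnitWithGcd (d₁ d₂ n : ℤ) (g : ℕ) : Prop :=
  ∃ c : ℤ, Int.gcd c n = 1 ∧ Int.gcd (c * d₁ - d₂) n = g

namespace HasUnitWithGcd

variable {d₁ d₂ : ℤ}

theorem one : HasUnitWithGcd d₁ d₂ 1 1 := ⟨1, by simp, by simp⟩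

theorem mul {a b : ℤ} {g h : ℕ} (ha : HasUnitWithGcd d₁ d₂ a g) (hb : HasUnitWithGcd d₁ d₂ b h)
    (hab : IsCoprime a b) : HasUnitWithGcd d₁ d₂ (a * b) (g * h) := by
  obtain ⟨c₁, hc₁, hg⟩ := ha
  obtain ⟨c₂, hc₂, hh⟩ := hb
  obtain ⟨c, hca, hcb⟩ := Int.exists_modEq_and_modEq hab c₁ c₂
  refine ⟨c, ?_, ?_⟩
  · rw [Int.gcd_mul_right_of_isCoprime _ hab, Int.gcd_eq_gcd_of_modEq hca,
      Int.gcd_eq_gcd_of_modEq hcb, hc₁, hc₂]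
  · rw [Int.gcd_mul_right_of_isCoprime _ hab,
      Int.gcd_eq_gcd_of_modEq ((hca.mul_right d₁).sub_right d₂),
      Int.gcd_eq_gcd_of_modEq ((hcb.mul_right d₁).sub_right d₂), hg, hh]

theorem prime_pow (hcop : IsCoprime d₁ d₂) {p : ℕ} (hp : p.Prime) (hp2 : p ≠ 2) (k : ℕ) :
    HasUnitWithGcd d₁ d₂ ((p : ℤ) ^ k) 1 := by
  have hpZ : Prime (p : ℤ) := Nat.prime_iff_prime_int.mp hp
  have gcd_eq_one {x : ℤ} (hx : ¬ (p : ℤ) ∣ x) : Int.gcd x ((p : ℤ) ^ k) = 1 :=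
    Int.isCoprime_iff_gcd_eq_one.mp ((hpZ.coprime_iff_not_dvd.mpr hx).symm.pow_right)
  have not_dvd_two : ¬ (p : ℤ) ∣ 2 := by
    exact_mod_cast fun h => hp2 ((Nat.prime_dvd_prime_iff_eq hp Nat.prime_two).mp h)
  by_cases h : (p : ℤ) ∣ d₁ - d₂
  · refine ⟨2, gcd_eq_one not_dvd_two, gcd_eq_one fun h' => ?_⟩
    have hd₁ : (p : ℤ) ∣ d₁ := by
      simpa only [show 2 * d₁ - d₂ - (d₁ - d₂) = d₁ by ring] using dvd_sub h' h
    exact hpZ.not_isUnit (hcop.isUnit_of_dvd' hd₁ (by simpa using dvd_sub hd₁ h))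
  · exact ⟨1, gcd_eq_one hpZ.not_dvd_one, gcd_eq_one (by simpa using h)⟩

theorem of_odd (hcop : IsCoprime d₁ d₂) {n : ℕ} (hn : Odd n) : HasUnitWithGcd d₁ d₂ n 1 := by
  induction n using Nat.recOnPosPrimePosCoprime with
  | prime_pow p k hp hk =>
    have hp2 : p ≠ 2 := by
      rintro rfl
      exact Nat.not_even_iff_odd.mpr hn ((Nat.even_pow' hk.ne').mpr even_two)
    exact_mod_cast prime_pow hcop hp hp2 k
  | zero => exact absurd hn Nat.not_odd_zero
  | one => exact_mod_cast one
  | coprime a b _ _ hab ha hb =>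
    obtain ⟨hao, hbo⟩ := Nat.odd_mul.mp hn
    exact_mod_cast (ha hao).mul (hb hbo) (Nat.isCoprime_iff_coprime.mpr hab)

theorem two_pow (hcop : IsCoprime d₁ d₂) (s : ℕ) :
    HasUnitWithGcd d₁ d₂ (2 ^ s) (if s ≠ 0 ∧ Odd d₁ ∧ Odd d₂ then 2 else 1) := by
  split_ifs with h
  · obtain ⟨hs, ⟨m, rfl⟩, hd₂⟩ := h
    have hodd : Odd (-d₂ * (2 * m ^ 2 + 2 * m + 1)) :=
      hd₂.neg.mul ⟨m ^ 2 + m, by ring⟩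
    obtain ⟨t, rfl⟩ := Nat.exists_eq_add_one_of_ne_zero hs
    refine ⟨-((2 * m + 1) * d₂), Int.gcd_two_pow_eq_one_of_odd ?_ _, ?_⟩
    · exact (Int.odd_mul.mpr ⟨⟨m, rfl⟩, hd₂⟩).neg
    · rw [show -((2 * m + 1) * d₂) * (2 * m + 1) - d₂ = 2 * (-d₂ * (2 * m ^ 2 + 2 * m + 1)) by
          ring,
        pow_succ' (2 : ℤ) t, Int.gcd_mul_left, Int.gcd_two_pow_eq_one_of_odd hodd]
      rfl
  · refine ⟨1, Int.gcd_two_pow_eq_one_of_odd odd_one s, ?_⟩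
    rcases Nat.eq_zero_or_pos s with rfl | hs
    · simp
    refine Int.gcd_two_pow_eq_one_of_odd ?_ s
    have not_both_even : ¬ (Even d₁ ∧ Even d₂) := fun ⟨h₁, h₂⟩ =>
      Int.not_even_one (by simpa using Int.isUnit_iff.mp (hcop.isUnit_of_dvd' h₁.two_dvd h₂.two_dvd))
    rcases Int.even_or_odd d₁ with h₁ | h₁ <;> rcases Int.even_or_odd d₂ with h₂ | h₂
    · exact absurd ⟨h₁, h₂⟩ not_both_even
    · simpa using h₁.sub_odd h₂
    · simpa using h₁.sub_even h₂
    · exact absurd ⟨hs.ne', h₁, h₂⟩ h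

end HasUnitWithGcd

theorem stmt_0_general (q d₁ d₂ : ℤ) (hq : 2 ≤ q)
    (hcop : Int.gcd d₁ d₂ = 1) :
    ∃ c : ℤ, Int.gcd c (q - 1) = 1 ∧
      Int.gcd (c * d₁ - d₂) (q - 1)
        = (if Odd q ∧ Odd d₁ ∧ Odd d₂ then 2 else 1) := by
  have hcop' : IsCoprime d₁ d₂ := Int.isCoprime_iff_gcd_eq_one.mpr hcop
  obtain ⟨n, hn⟩ := Int.eq_ofNat_of_zero_le (by omega : 0 ≤ q - 1)
  obtain ⟨s, m, hm, rfl⟩ := Nat.exists_eq_two_pow_mul_odd (n := n) (by omega)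
  have hqs : Odd q ↔ s ≠ 0 := by
    rw [← Int.not_even_iff_odd, ← Int.even_sub_one, hn, Int.even_coe_nat, Nat.even_mul,
      Nat.even_pow]
    simp [Nat.not_even_iff_odd.mpr hm]
  have h2m : IsCoprime ((2 ^ s : ℕ) : ℤ) m :=
    Nat.isCoprime_iff_coprime.mpr ((Nat.coprime_two_left.mpr hm).pow_left s)
  push_cast at hn h2m
  obtain ⟨c, hc, hcd⟩ := (HasUnitWithGcd.two_pow hcop' s).mul (HasUnitWithGcd.of_odd hcop' hm) h2m
  refine ⟨c, hn ▸ hc, ?_⟩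
  simpa only [hn, hqs, mul_one] using hcd

theorem stmt_0 (q d₁ d₂ : ℤ) (hq : 2 ≤ q) (hd₁ : 1 ≤ d₁) (hd₂ : 1 ≤ d₂)
    (hcop : Int.gcd d₁ d₂ = 1) :
    ∃ c : ℤ, Int.gcd c (q - 1) = 1 ∧
      Int.gcd (c * d₁ - d₂) (q - 1)
        = (if Odd q ∧ Odd d₁ ∧ Odd d₂ then 2 else 1) :=
  stmt_0_general q d₁ d₂ hq hcop
end

section
/- For integers q ≥ 2 and coprime d₁, d₂ ≥ 1 with d = d₁ + d₂, gcd((q^d − 1)/(q − 1), (q^{d₁} − 1)(q^{d₂} − 1)/(q − 1)) = gcd(d, q − 1). -/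
/-!
Write `[n]` for `1 + q + ⋯ + q^(n-1)`, so that `q^n - 1 = (q - 1) [n]`. From
`gcd (q^m - 1) (q^n - 1) = q^(gcd m n) - 1` one gets `gcd [m] [n] = [gcd m n]`; since `d` is coprime
to both `d₁` and `d₂`, the sum `[d]` is coprime to `[d₁]` and `[d₂]`. Hence
`gcd [d] ((q - 1) [d₁] [d₂]) = gcd [d] (q - 1)`, and this is `gcd d (q - 1)` because `[d] ≡ d`
modulo `q - 1`.
-/

open Finset

namespace Nat

theorem sub_one_mul_geom_sum (q n : ℕ) : (q - 1) * ∑ i ∈ range n, q ^ i = q ^ n - 1 := by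
  rcases q with _ | q
  · rcases n with _ | n <;> simp
  · simpa [mul_comm] using Nat.eq_sub_of_add_eq (geom_sum_mul_add q n)

theorem geom_sum_gcd_geom_sum (q m n : ℕ) :
    gcd (∑ i ∈ range m, q ^ i) (∑ i ∈ range n, q ^ i) = ∑ i ∈ range (gcd m n), q ^ i := by
  rcases q with _ | _ | q
  · simp only [zero_geom_sum]
    split_ifs <;> simp_all
  · simp
  · refine Nat.eq_of_mul_eq_mul_left (Nat.succ_pos q) ?_
    change (q + 2 - 1) * _ = (q + 2 - 1) * _
    rw [← gcd_mul_left, sub_one_mul_geom_sum, sub_one_mul_geom_sum, sub_one_mul_geom_sum,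
      pow_sub_one_gcd_pow_sub_one]

theorem coprime_geom_sum_of_coprime (q : ℕ) {m n : ℕ} (h : Coprime m n) :
    Coprime (∑ i ∈ range m, q ^ i) (∑ i ∈ range n, q ^ i) := by
  rw [Coprime, geom_sum_gcd_geom_sum, h.gcd_eq_one, geom_sum_one]

theorem geom_sum_modEq_of_modEq_one {q m : ℕ} (hq : q ≡ 1 [MOD m]) (n : ℕ) :
    ∑ i ∈ range n, q ^ i ≡ n [MOD m] := by
  simpa using ModEq.sum (s := range n) fun i _ ↦ hq.pow i

end Nat

theorem stmt_7_general (q d₁ d₂ : ℕ) (hq : 2 ≤ q)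
    (hcop : Nat.gcd d₁ d₂ = 1) :
    Nat.gcd (∑ i ∈ Finset.range (d₁ + d₂), q ^ i)
        ((q ^ d₁ - 1) * ∑ i ∈ Finset.range d₂, q ^ i)
      = Nat.gcd (d₁ + d₂) (q - 1) := by
  have hcop₁ : Nat.Coprime d₁ (d₁ + d₂) := by
    rwa [Nat.Coprime, Nat.gcd_comm, Nat.gcd_self_add_left, Nat.gcd_comm]
  have hcop₂ : Nat.Coprime d₂ (d₁ + d₂) := by
    rwa [Nat.Coprime, Nat.gcd_comm, Nat.gcd_add_self_left]
  calc Nat.gcd (∑ i ∈ range (d₁ + d₂), q ^ i) ((q ^ d₁ - 1) * ∑ i ∈ range d₂, q ^ i)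
      = Nat.gcd (∑ i ∈ range (d₁ + d₂), q ^ i) ((∑ i ∈ range d₁, q ^ i) * (q - 1)) := by
        rw [(Nat.coprime_geom_sum_of_coprime q hcop₂).gcd_mul_right_cancel_right,
          ← Nat.sub_one_mul_geom_sum, mul_comm]
    _ = Nat.gcd (∑ i ∈ range (d₁ + d₂), q ^ i) (q - 1) :=
        (Nat.coprime_geom_sum_of_coprime q hcop₁).gcd_mul_left_cancel_right _
    _ = Nat.gcd (d₁ + d₂) (q - 1) :=
        (Nat.geom_sum_modEq_of_modEq_one (Nat.modEq_sub (by omega)) _).gcd_eq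

theorem stmt_7 (q d₁ d₂ : ℕ) (hq : 2 ≤ q) (hd₁ : 1 ≤ d₁) (hd₂ : 1 ≤ d₂)
    (hcop : Nat.gcd d₁ d₂ = 1) :
    Nat.gcd (∑ i ∈ Finset.range (d₁ + d₂), q ^ i)
        ((q ^ d₁ - 1) * ∑ i ∈ Finset.range d₂, q ^ i)
      = Nat.gcd (d₁ + d₂) (q - 1) :=
  stmt_7_general q d₁ d₂ hq hcop
end
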